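/- arXiv:1503.03605 — 4 statements merged into one kernel-verified Lean document; each statement's English description precedes it below -/
import Mathlib

section
/- (Drucker–Prager plastic correction, forward direction.) Assume f̂(p^tr, ϱ^tr, H(ε̄^{p,tr})) > 0. If (σ, ε̄^p, Δλ) with Δλ > 0 solves the plastic corrector system, then (p(σ), ϱ(σ), ε̄^p, Δλ) solves the reduced system; in particular p(σ) = p^tr − Δλ·K·η̄, ϱ(σ) = max(0, ϱ^tr − Δλ·G·√2), ε̄^p = ε̄^{p,tr} + Δλ·ξ, and f̂(p(σ), ϱ(σ), H(ε̄^p)) = 0. -/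
open Matrix

noncomputable section

/-- The space of real 3×3 matrices (we restrict to symmetric ones via `Matrix.IsSymm`). -/
abbrev Mat3 := Matrix (Fin 3) (Fin 3) ℝ

/-- Frobenius inner product (for symmetric matrices): ⟨A,B⟩ = tr(A·B). -/
def finner (A B : Mat3) : ℝ := (A * B).trace

/-- Norm induced by `finner` (Frobenius norm on symmetric matrices). -/
def fnorm (A : Mat3) : ℝ := Real.sqrt (finner A A)

/-- Hydrostatic pressure: p(σ) = tr(σ)/3. -/
def pvol (σ : Mat3) : ℝ := σ.trace / 3

/-- Deviatoric part: dev(σ) = σ − p(σ)·I. -/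
def devm (σ : Mat3) : Mat3 := σ - pvol σ • (1 : Mat3)

/-- ϱ(σ) = ‖dev(σ)‖. -/
def rho (σ : Mat3) : ℝ := fnorm (devm σ)

/-- The subdifferential ∂ϱ(σ): symmetric matrices n̂ with
ϱ(τ) ≥ ϱ(σ) + ⟨n̂, τ − σ⟩ for all symmetric τ. -/
def subgradRho (σ : Mat3) : Set Mat3 :=
  {n : Mat3 | n.IsSymm ∧ ∀ τ : Mat3, τ.IsSymm → rho σ + finner n (τ - σ) ≤ rho τ}

/-- Drucker–Prager yield function f̂(p,ϱ,κ) = √(1/2)·ϱ + η·p − ξ·(c₀ + κ). -/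
def fDP (η ξ c0 p ϱ κ : ℝ) : ℝ := Real.sqrt (1/2) * ϱ + η * p - ξ * (c0 + κ)

namespace DPaux

lemma finner_expand (A B : Mat3) : finner A B = ∑ i, ∑ j, A i j * B j i := by
  simp [finner, Matrix.trace, Matrix.diag, Matrix.mul_apply]

lemma finner_self_nonneg {A : Mat3} (hA : A.IsSymm) : 0 ≤ finner A A := by
  rw [finner_expand]
  refine Finset.sum_nonneg fun i _ => Finset.sum_nonneg fun j _ => ?_
  rw [hA.apply]
  exact mul_self_nonneg _

lemma fnorm_nonneg (A : Mat3) : 0 ≤ fnorm A := Real.sqrt_nonneg _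

lemma fnorm_sq {A : Mat3} (hA : A.IsSymm) : fnorm A ^ 2 = finner A A :=
  Real.sq_sqrt (finner_self_nonneg hA)

lemma finner_comm (A B : Mat3) : finner A B = finner B A := by
  exact Matrix.trace_mul_comm A B

lemma finner_smul_right (t : ℝ) (A B : Mat3) : finner A (t • B) = t * finner A B := by
  unfold finner
  rw [Matrix.mul_smul, Matrix.trace_smul, smul_eq_mul]

lemma finner_one (A : Mat3) : finner A 1 = A.trace := by simp [finner]

lemma finner_smul_left (t : ℝ) (A B : Mat3) : finner (t • A) B = t * finner A B := by
  unfold finner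
  rw [Matrix.smul_mul, Matrix.trace_smul, smul_eq_mul]

lemma finner_add_self (A B : Mat3) : finner (A + B) (A + B)
    = finner A A + 2 * finner A B + finner B B := by
  unfold finner
  rw [Matrix.add_mul, Matrix.mul_add, Matrix.mul_add, Matrix.trace_add, Matrix.trace_add,
    Matrix.trace_add, Matrix.trace_mul_comm B A]
  ring

lemma finner_add_right (A B C : Mat3) : finner A (B + C) = finner A B + finner A C := by
  simp [finner, Matrix.mul_add]

lemma finner_sub_right (A B C : Mat3) : finner A (B - C) = finner A B - finner A C := by
  simp [finner, Matrix.mul_sub]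

lemma fnorm_smul (t : ℝ) (A : Mat3) : fnorm (t • A) = |t| * fnorm A := by
  unfold fnorm
  have h : finner (t • A) (t • A) = t ^ 2 * finner A A := by
    unfold finner
    rw [Matrix.smul_mul, Matrix.mul_smul, Matrix.trace_smul, Matrix.trace_smul, smul_eq_mul, smul_eq_mul]
    ring
  rw [h, Real.sqrt_mul (sq_nonneg t), Real.sqrt_sq_eq_abs]

lemma finner_cs {A B : Mat3} (hA : A.IsSymm) (hB : B.IsSymm) :
    finner A B ≤ fnorm A * fnorm B := by
  have eAB : finner A B = ∑ p ∈ (Finset.univ ×ˢ Finset.univ : Finset (Fin 3 × Fin 3)),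
      A p.1 p.2 * B p.1 p.2 := by
    rw [finner_expand, ← Finset.sum_product']
    exact Finset.sum_congr rfl fun p _ => by rw [hB.apply]
  have eAA : finner A A = ∑ p ∈ (Finset.univ ×ˢ Finset.univ : Finset (Fin 3 × Fin 3)),
      A p.1 p.2 ^ 2 := by
    rw [finner_expand, ← Finset.sum_product']
    exact Finset.sum_congr rfl fun p _ => by rw [hA.apply]; ring
  have eBB : finner B B = ∑ p ∈ (Finset.univ ×ˢ Finset.univ : Finset (Fin 3 × Fin 3)),
      B p.1 p.2 ^ 2 := by
    rw [finner_expand, ← Finset.sum_product']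
    exact Finset.sum_congr rfl fun p _ => by rw [hB.apply]; ring
  have h2 : finner A B ^ 2 ≤ finner A A * finner B B := by
    rw [eAB, eAA, eBB]
    exact Finset.sum_mul_sq_le_sq_mul_sq _ _ _
  calc finner A B ≤ |finner A B| := le_abs_self _
    _ = Real.sqrt (finner A B ^ 2) := (Real.sqrt_sq_eq_abs _).symm
    _ ≤ Real.sqrt (finner A A * finner B B) := Real.sqrt_le_sqrt h2
    _ = fnorm A * fnorm B := by
        rw [Real.sqrt_mul (finner_self_nonneg hA)]; rfl

lemma fnorm_add_le {A B : Mat3} (hA : A.IsSymm) (hB : B.IsSymm) :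
    fnorm (A + B) ≤ fnorm A + fnorm B := by
  have hAB := finner_cs hA hB
  have e : finner (A + B) (A + B) = finner A A + 2 * finner A B + finner B B :=
    finner_add_self A B
  have h1 : finner (A + B) (A + B) ≤ (fnorm A + fnorm B) ^ 2 := by
    nlinarith [fnorm_sq hA, fnorm_sq hB, fnorm_nonneg A, fnorm_nonneg B]
  calc fnorm (A + B) = Real.sqrt (finner (A + B) (A + B)) := rfl
    _ ≤ Real.sqrt ((fnorm A + fnorm B) ^ 2) := Real.sqrt_le_sqrt h1
    _ = fnorm A + fnorm B := Real.sqrt_sq (add_nonneg (fnorm_nonneg A) (fnorm_nonneg B))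

end DPaux

/-- Drucker–Prager plastic correction, forward direction. -/
theorem DP_plastic_corrector_forward
    (G K η ηb ξ c0 : ℝ)
    (hG : 0 < G) (hK : 0 < K) (hη : 0 < η) (hηb : 0 < ηb) (hξ : 0 < ξ) (hc0 : 0 < c0)
    (H : ℝ → ℝ) (Hmono : MonotoneOn H (Set.Ici 0))
    (Hcont : ContinuousOn H (Set.Ici 0)) (H0 : H 0 = 0) (Hnn : ∀ x ≥ (0:ℝ), 0 ≤ H x)
    (σtr : Mat3) (hσtr : σtr.IsSymm) (εtr : ℝ) (hεtr : 0 ≤ εtr)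
    (htrial : 0 < fDP η ξ c0 (pvol σtr) (rho σtr) (H εtr))
    (σ : Mat3) (hσ : σ.IsSymm) (εp Δl : ℝ) (hΔl : 0 < Δl)
    (n : Mat3) (hn : n ∈ subgradRho σ)
    (hσeq : σ = σtr - Δl • ((G * Real.sqrt 2) • n + (K * ηb) • (1 : Mat3)))
    (hεeq : εp = εtr + Δl * ξ)
    (hf : fDP η ξ c0 (pvol σ) (rho σ) (H εp) = 0) :
    pvol σ = pvol σtr - Δl * K * ηb ∧
    rho σ = max 0 (rho σtr - Δl * G * Real.sqrt 2) ∧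
    εp = εtr + Δl * ξ ∧
    fDP η ξ c0 (pvol σ) (rho σ) (H εp) = 0 := by

  obtain ⟨hnSymm, hnsub⟩ := hn
  have hsqrt2 : (0:ℝ) < Real.sqrt 2 := Real.sqrt_pos.mpr (by norm_num)
  have hcpos : 0 < Δl * (G * Real.sqrt 2) := by positivity
  set c : ℝ := Δl * (G * Real.sqrt 2) with hc
  -- trace of n is zero
  have htrn : n.trace = 0 := by
    have key : ∀ t : ℝ, t * n.trace ≤ 0 := by
      intro t
      have hsymτ : (σ + t • (1:Mat3)).IsSymm := hσ.add (Matrix.isSymm_one.smul t)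
      have hpv : pvol (σ + t • (1:Mat3)) = pvol σ + t := by
        simp [pvol, Matrix.trace_add, Matrix.trace_smul, Matrix.trace_one]
        ring
      have hdev : devm (σ + t • (1:Mat3)) = devm σ := by
        unfold devm
        rw [hpv, add_smul]
        module
      have hρ : rho (σ + t • (1:Mat3)) = rho σ := by unfold rho; rw [hdev]
      have h := hnsub _ hsymτ
      rw [hρ] at h
      have he : σ + t • (1:Mat3) - σ = t • (1:Mat3) := by module
      rw [he, DPaux.finner_smul_right, DPaux.finner_one] at h
      linarith
    have h1 := key n.trace
    exact mul_self_eq_zero.mp (le_antisymm h1 (mul_self_nonneg _))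
  -- pressure equation
  have hp : pvol σ = pvol σtr - Δl * K * ηb := by
    rw [hσeq]
    simp [pvol, Matrix.trace_sub, Matrix.trace_add, Matrix.trace_smul, Matrix.trace_one, htrn]
    ring
  -- deviatoric relation
  have hdev : devm σ = devm σtr - c • n := by
    unfold devm
    rw [hp, hc, hσeq]
    module
  have hdevtr : devm σtr = devm σ + c • n := by rw [hdev]; module
  -- symmetry facts
  have hsymdev : (devm σ).IsSymm := hσ.sub (Matrix.isSymm_one.smul _)
  have hsymdevtr : (devm σtr).IsSymm := hσtr.sub (Matrix.isSymm_one.smul _)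
  -- rho 0 = 0
  have hrho0 : rho (0:Mat3) = 0 := by
    simp [rho, devm, pvol, fnorm, finner]
  -- rho (2•σ) = 2 * rho σ
  have hpv2 : pvol ((2:ℝ) • σ) = 2 * pvol σ := by
    simp [pvol, Matrix.trace_smul]; ring
  have hdev2 : devm ((2:ℝ) • σ) = (2:ℝ) • devm σ := by
    unfold devm; rw [hpv2]; module
  have hrho2 : rho ((2:ℝ) • σ) = 2 * rho σ := by
    unfold rho
    rw [hdev2, DPaux.fnorm_smul]
    norm_num
  -- ⟨n, σ⟩ = rho σ
  have h0 := hnsub 0 Matrix.isSymm_zero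
  rw [hrho0] at h0
  have h0' : finner n (0 - σ) = -finner n σ := by
    rw [zero_sub]
    have : -σ = (-1:ℝ) • σ := by module
    rw [this, DPaux.finner_smul_right]; ring
  rw [h0'] at h0
  have h2 := hnsub ((2:ℝ) • σ) (hσ.smul 2)
  rw [hrho2] at h2
  have h2' : (2:ℝ) • σ - σ = σ := by module
  rw [h2'] at h2
  have hnσ : finner n σ = rho σ := by linarith
  -- ⟨n, devm σ⟩ = rho σ
  have hns : finner n (devm σ) = rho σ := by
    unfold devm
    rw [DPaux.finner_sub_right, DPaux.finner_smul_right, DPaux.finner_one, htrn, hnσ]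
    ring
  -- ‖n‖ ≤ 1
  have hpvn : pvol n = 0 := by simp [pvol, htrn]
  have hdevn : devm n = n := by unfold devm; rw [hpvn]; module
  have hpvσn : pvol (σ + n) = pvol σ := by
    simp [pvol, Matrix.trace_add, htrn]
  have hdevσn : devm (σ + n) = devm σ + n := by
    unfold devm; rw [hpvσn]; module
  have hτn := hnsub (σ + n) (hσ.add hnSymm)
  have hrhoσn : rho (σ + n) ≤ rho σ + fnorm n := by
    unfold rho
    rw [hdevσn]
    exact DPaux.fnorm_add_le hsymdev hnSymm
  have hσnσ : σ + n - σ = n := by module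
  rw [hσnσ] at hτn
  have hnn_le : finner n n ≤ fnorm n := by
    have := le_trans hτn hrhoσn
    unfold rho at this
    linarith
  have hfn2 : fnorm n ^ 2 = finner n n := DPaux.fnorm_sq hnSymm
  have hfn1 : fnorm n ≤ 1 := by nlinarith [DPaux.fnorm_nonneg n, sq_nonneg (fnorm n - 1)]
  -- subgradient at σtr
  have hσtrσ : σtr - σ = c • n + (Δl * (K * ηb)) • (1:Mat3) := by
    rw [hσeq, hc]; module
  have hA := hnsub σtr hσtr
  rw [hσtrσ, DPaux.finner_add_right, DPaux.finner_smul_right, DPaux.finner_smul_right,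
    DPaux.finner_one, htrn] at hA
  have hAkey : rho σ + c * finner n n ≤ rho σtr := by linarith
  -- norm of devm σtr
  have hrtr2 : rho σtr ^ 2 = rho σ ^ 2 + 2 * c * rho σ + c ^ 2 * finner n n := by
    have e1 : finner (devm σtr) (devm σtr)
        = finner (devm σ) (devm σ) + 2 * c * finner n (devm σ) + c ^ 2 * finner n n := by
      rw [hdevtr, DPaux.finner_add_self, DPaux.finner_smul_right,
        DPaux.finner_smul_left, DPaux.finner_smul_right, DPaux.finner_comm (devm σ) n]
      ring
    have e2 : rho σtr ^ 2 = finner (devm σtr) (devm σtr) := DPaux.fnorm_sq hsymdevtr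
    have e3 : rho σ ^ 2 = finner (devm σ) (devm σ) := DPaux.fnorm_sq hsymdev
    rw [e2, e1, ← e3, hns]
  have hr0 : 0 ≤ rho σ := DPaux.fnorm_nonneg _
  have hrtr0 : 0 ≤ rho σtr := DPaux.fnorm_nonneg _
  have hnn0 : 0 ≤ finner n n := DPaux.finner_self_nonneg hnSymm
  -- main rho equation
  have hrhoeq : rho σ = max 0 (rho σtr - Δl * G * Real.sqrt 2) := by
    have hcc : Δl * G * Real.sqrt 2 = c := by rw [hc]; ring
    rw [hcc]
    rcases eq_or_lt_of_le hr0 with hr | hr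
    · -- rho σ = 0
      have hnnle1 : finner n n ≤ 1 := by
        rw [← hfn2]
        calc fnorm n ^ 2 ≤ 1 ^ 2 := pow_le_pow_left₀ (DPaux.fnorm_nonneg n) hfn1 2
          _ = 1 := one_pow 2
      have h1 : rho σtr ^ 2 ≤ c ^ 2 := by
        have h2 : c ^ 2 * finner n n ≤ c ^ 2 * 1 :=
          mul_le_mul_of_nonneg_left hnnle1 (sq_nonneg c)
        calc rho σtr ^ 2 = rho σ ^ 2 + 2 * c * rho σ + c ^ 2 * finner n n := hrtr2
          _ = (0:ℝ) ^ 2 + 2 * c * 0 + c ^ 2 * finner n n := by rw [← hr]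
          _ = c ^ 2 * finner n n := by ring
          _ ≤ c ^ 2 * 1 := h2
          _ = c ^ 2 := by ring
      have hle : rho σtr ≤ c :=
        calc rho σtr = Real.sqrt (rho σtr ^ 2) := (Real.sqrt_sq hrtr0).symm
          _ ≤ Real.sqrt (c ^ 2) := Real.sqrt_le_sqrt h1
          _ = c := Real.sqrt_sq hcpos.le
      rw [max_eq_left (by linarith), ← hr]
    · -- rho σ > 0 : ‖n‖ = 1
      have hcs0 := DPaux.finner_cs hnSymm hsymdev
      rw [hns] at hcs0
      have hcs : rho σ ≤ fnorm n * rho σ := hcs0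
      have hfn_ge : 1 ≤ fnorm n := by
        by_contra hlt
        push_neg at hlt
        have h1 := mul_lt_mul_of_pos_right hlt hr
        rw [one_mul] at h1
        linarith
      have hfn : fnorm n = 1 := le_antisymm hfn1 hfn_ge
      have hnn1 : finner n n = 1 := by rw [← hfn2, hfn]; norm_num
      have h1 : rho σtr ^ 2 = (rho σ + c) ^ 2 := by rw [hrtr2, hnn1]; ring
      have : rho σtr = rho σ + c :=
        calc rho σtr = Real.sqrt (rho σtr ^ 2) := (Real.sqrt_sq hrtr0).symm
          _ = Real.sqrt ((rho σ + c) ^ 2) := by rw [h1]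
          _ = rho σ + c := Real.sqrt_sq (by linarith)
      rw [this, max_eq_right (by linarith)]
      ring
  exact ⟨hp, hrhoeq, hεeq, hf⟩
end
end

section
/- (Drucker–Prager plastic correction, converse direction.) Assume f̂(p^tr, ϱ^tr, H(ε̄^{p,tr})) > 0. Let (p, ϱ, ε̄^p, Δλ) solve the reduced system with Δλ > 0, and define σ = σ^tr − Δλ·(G·√2·(s^tr/ϱ^tr) + K·η̄·I) if ϱ^tr > Δλ·G·√2, and σ = (p^tr − Δλ·K·η̄)·I if ϱ^tr ≤ Δλ·G·√2. Then (σ, ε̄^p, Δλ) solves the plastic corrector system: there exists n̂ ∈ ∂ϱ(σ) with σ = σ^tr − Δλ·(G·√2·n̂ + K·η̄·I), ε̄^p = ε̄^{p,tr} + Δλ·ξ, and f̂(p(σ), ϱ(σ), H(ε̄^p)) = 0; moreover p(σ) = p and ϱ(σ) = ϱ. -/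
open Matrix

noncomputable section

/-!
The correction direction `n` is traceless, so subtracting `c • n + b • 1` lowers the pressure by
`b` and the deviator by `c • n`. If `c < ϱ(σᵗʳ)`, take the unit normal `n = sᵗʳ / ϱ(σᵗʳ)`: the new
deviator is `(ϱ(σᵗʳ) - c) • n`. Otherwise return to the apex with `n = sᵗʳ / c`, of norm at most `1`,
and the new deviator vanishes. In both cases `n` is symmetric, traceless, `‖n‖ ≤ 1` and
`⟨n, dev σ⟩ = ϱ(σ)`, which by Cauchy–Schwarz makes `n` a subgradient of `ϱ` at `σ`. The yield
condition is then inherited from the reduced system, since `p(σ) = p` and `ϱ(σ) = ϱ`.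
-/

lemma finner_eq_sum_of_isSymm (A : Mat3) {B : Mat3} (hB : B.IsSymm) :
    finner A B = ∑ p : Fin 3 × Fin 3, A p.1 p.2 * B p.1 p.2 := by
  simp only [finner, trace, diag, mul_apply, Fintype.sum_prod_type, hB.apply]

lemma finner_smul_left (c : ℝ) (A B : Mat3) : finner (c • A) B = c * finner A B := by
  rw [finner, smul_mul, trace_smul, smul_eq_mul, finner]

lemma finner_smul_right (c : ℝ) (A B : Mat3) : finner A (c • B) = c * finner A B := by
  rw [finner, Matrix.mul_smul, trace_smul, smul_eq_mul, finner]

lemma finner_sub_right (A B C : Mat3) : finner A (B - C) = finner A B - finner A C := by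
  rw [finner, Matrix.mul_sub, trace_sub, finner, finner]

lemma finner_devm_of_trace_eq_zero {n : Mat3} (hn : n.trace = 0) (σ : Mat3) :
    finner n (devm σ) = finner n σ := by
  rw [devm, finner_sub_right, finner_smul_right, sub_eq_self, finner, Matrix.mul_one, hn, mul_zero]

lemma fnorm_nonneg (A : Mat3) : 0 ≤ fnorm A := Real.sqrt_nonneg _

lemma fnorm_smul (c : ℝ) (A : Mat3) : fnorm (c • A) = |c| * fnorm A := by
  rw [fnorm, finner_smul_left, finner_smul_right, ← mul_assoc,
    Real.sqrt_mul (mul_self_nonneg c), Real.sqrt_mul_self_eq_abs, fnorm]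

lemma fnorm_inv_smul_self {A : Mat3} (hA : fnorm A ≠ 0) : fnorm ((fnorm A)⁻¹ • A) = 1 := by
  rw [fnorm_smul, abs_inv, abs_of_nonneg (fnorm_nonneg A), inv_mul_cancel₀ hA]

lemma sq_fnorm {A : Mat3} (hA : A.IsSymm) : fnorm A ^ 2 = finner A A :=
  Real.sq_sqrt <| (finner_eq_sum_of_isSymm A hA).symm ▸
    Finset.sum_nonneg fun _ _ => mul_self_nonneg _

lemma finner_le_fnorm_mul_fnorm {A B : Mat3} (hA : A.IsSymm) (hB : B.IsSymm) :
    finner A B ≤ fnorm A * fnorm B := by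
  simp only [fnorm, finner_eq_sum_of_isSymm _ hA, finner_eq_sum_of_isSymm _ hB, ← sq]
  exact Real.sum_mul_le_sqrt_mul_sqrt _ _ _

lemma trace_devm (σ : Mat3) : (devm σ).trace = 0 := by
  simp only [devm, pvol, trace_sub, trace_smul, trace_one, Fintype.card_fin, smul_eq_mul]
  ring

lemma trace_smul_devm (a : ℝ) (σ : Mat3) : (a • devm σ).trace = 0 := by
  rw [trace_smul, trace_devm, smul_zero]

lemma Matrix.IsSymm.devm {σ : Mat3} (hσ : σ.IsSymm) : (devm σ).IsSymm :=
  hσ.sub (isSymm_one.smul _)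

lemma devm_smul_one (a : ℝ) : devm (a • 1) = 0 := by
  simp [devm, pvol, trace_smul]

lemma mem_subgradRho_of_finner_devm_eq {σ n : Mat3} (hn : n.IsSymm) (htr : n.trace = 0)
    (hnorm : fnorm n ≤ 1) (hσ : finner n (devm σ) = rho σ) : n ∈ subgradRho σ := by
  refine ⟨hn, fun τ hτ => ?_⟩
  have hτ' : finner n (devm τ) ≤ rho τ :=
    calc finner n (devm τ) ≤ fnorm n * rho τ := finner_le_fnorm_mul_fnorm hn hτ.devm
      _ ≤ rho τ := mul_le_of_le_one_left (fnorm_nonneg _) hnorm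
  rw [finner_sub_right, ← finner_devm_of_trace_eq_zero htr, ← finner_devm_of_trace_eq_zero htr σ]
  linarith

lemma rho_eq_of_devm_eq_smul {σ n : Mat3} (hnorm : fnorm n = 1) {t : ℝ} (ht : 0 ≤ t)
    (hσ : devm σ = t • n) : rho σ = t := by
  rw [rho, hσ, fnorm_smul, hnorm, abs_of_nonneg ht, mul_one]

lemma mem_subgradRho_of_devm_eq_smul {σ n : Mat3} (hn : n.IsSymm) (htr : n.trace = 0)
    (hnorm : fnorm n = 1) {t : ℝ} (ht : 0 ≤ t) (hσ : devm σ = t • n) : n ∈ subgradRho σ :=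
  mem_subgradRho_of_finner_devm_eq hn htr hnorm.le <| by
    rw [rho_eq_of_devm_eq_smul hnorm ht hσ, hσ, finner_smul_right, ← sq_fnorm hn, hnorm]
    ring

lemma mem_subgradRho_of_devm_eq_zero {σ n : Mat3} (hn : n.IsSymm) (htr : n.trace = 0)
    (hnorm : fnorm n ≤ 1) (hσ : devm σ = 0) : n ∈ subgradRho σ :=
  mem_subgradRho_of_finner_devm_eq hn htr hnorm <| by simp [rho, hσ, finner, fnorm]

lemma pvol_sub_smul_sub_smul_one (σ : Mat3) {n : Mat3} (hn : n.trace = 0) (c b : ℝ) :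
    pvol (σ - c • n - b • 1) = pvol σ - b := by
  simp only [pvol, trace_sub, trace_smul, hn, trace_one, Fintype.card_fin, smul_eq_mul]
  ring

lemma devm_sub_smul_sub_smul_one (σ : Mat3) {n : Mat3} (hn : n.trace = 0) (c b : ℝ) :
    devm (σ - c • n - b • 1) = devm σ - c • n := by
  rw [devm, pvol_sub_smul_sub_smul_one σ hn, devm]
  module

/-- The return map with deviatoric step `c = Δλ G √2` and volumetric step `b = Δλ K η̄`. -/
def returnMap (σtr : Mat3) (c b : ℝ) : Mat3 :=
  if c < rho σtr then σtr - c • ((rho σtr)⁻¹ • devm σtr) - b • 1 else (pvol σtr - b) • 1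

lemma pvol_returnMap (σtr : Mat3) (c b : ℝ) : pvol (returnMap σtr c b) = pvol σtr - b := by
  unfold returnMap
  split_ifs
  · exact pvol_sub_smul_sub_smul_one σtr (trace_smul_devm _ σtr) c b
  · simp [pvol, trace_smul]

lemma devm_returnMap_of_lt {σtr : Mat3} {c : ℝ} (hc : 0 ≤ c) (h : c < rho σtr) (b : ℝ) :
    devm (returnMap σtr c b) = (rho σtr - c) • ((rho σtr)⁻¹ • devm σtr) := by
  have hr : rho σtr ≠ 0 := (hc.trans_lt h).ne'
  rw [returnMap, if_pos h, devm_sub_smul_sub_smul_one σtr (trace_smul_devm _ σtr), sub_smul,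
    smul_smul (rho σtr), mul_inv_cancel₀ hr, one_smul]

lemma devm_returnMap_of_le {σtr : Mat3} {c : ℝ} (h : rho σtr ≤ c) (b : ℝ) :
    devm (returnMap σtr c b) = 0 := by
  rw [returnMap, if_neg h.not_gt, devm_smul_one]

lemma returnMap_of_le {σtr : Mat3} {c : ℝ} (hc : c ≠ 0) (h : rho σtr ≤ c) (b : ℝ) :
    returnMap σtr c b = σtr - c • (c⁻¹ • devm σtr) - b • 1 := by
  rw [returnMap, if_neg h.not_gt, smul_smul, mul_inv_cancel₀ hc, one_smul, devm]
  module

lemma rho_returnMap (σtr : Mat3) {c : ℝ} (hc : 0 ≤ c) (b : ℝ) :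
    rho (returnMap σtr c b) = max 0 (rho σtr - c) := by
  rcases lt_or_ge c (rho σtr) with h | h
  · rw [max_eq_right (sub_nonneg.2 h.le)]
    exact rho_eq_of_devm_eq_smul (fnorm_inv_smul_self (hc.trans_lt h).ne') (sub_nonneg.2 h.le)
      (devm_returnMap_of_lt hc h b)
  · rw [max_eq_left (sub_nonpos.2 h), rho, devm_returnMap_of_le h b]
    simp [fnorm, finner]

lemma exists_mem_subgradRho_returnMap {σtr : Mat3} (hσtr : σtr.IsSymm) {c : ℝ} (hc : 0 < c)
    (b : ℝ) :
    ∃ n ∈ subgradRho (returnMap σtr c b), returnMap σtr c b = σtr - c • n - b • 1 := by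
  rcases lt_or_ge c (rho σtr) with h | h
  · refine ⟨(rho σtr)⁻¹ • devm σtr, ?_, if_pos h⟩
    exact mem_subgradRho_of_devm_eq_smul (hσtr.devm.smul _) (trace_smul_devm _ σtr)
      (fnorm_inv_smul_self (hc.trans h).ne') (sub_nonneg.2 h.le) (devm_returnMap_of_lt hc.le h b)
  · refine ⟨c⁻¹ • devm σtr, ?_, returnMap_of_le hc.ne' h b⟩
    have hnorm : fnorm (c⁻¹ • devm σtr) ≤ 1 := by
      rw [fnorm_smul, abs_inv, abs_of_pos hc]
      exact inv_mul_le_one_of_le₀ h hc.le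
    exact mem_subgradRho_of_devm_eq_zero (hσtr.devm.smul _) (trace_smul_devm _ σtr) hnorm
      (devm_returnMap_of_le h b)

theorem DP_plastic_corrector_converse_general
    (G K η ηb ξ c0 : ℝ)
    (hG : 0 < G)
    (H : ℝ → ℝ)
    (σtr : Mat3) (hσtr : σtr.IsSymm) (εtr : ℝ)
    (p ϱ εp Δl : ℝ) (hΔl : 0 < Δl)
    (hpeq : p = pvol σtr - Δl * K * ηb)
    (hϱeq : ϱ = max 0 (rho σtr - Δl * G * Real.sqrt 2))
    (hεeq : εp = εtr + Δl * ξ)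
    (hfred : fDP η ξ c0 p ϱ (H εp) = 0)
    (σ : Mat3)
    (hσdef : σ = if Δl * G * Real.sqrt 2 < rho σtr then
        σtr - Δl • ((G * Real.sqrt 2) • ((rho σtr)⁻¹ • devm σtr) + (K * ηb) • (1 : Mat3))
      else
        (pvol σtr - Δl * K * ηb) • (1 : Mat3)) :
    pvol σ = p ∧ rho σ = ϱ ∧
    (∃ n ∈ subgradRho σ,
      σ = σtr - Δl • ((G * Real.sqrt 2) • n + (K * ηb) • (1 : Mat3))) ∧
    εp = εtr + Δl * ξ ∧
    fDP η ξ c0 (pvol σ) (rho σ) (H εp) = 0 := by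
  have hσ : σ = returnMap σtr (Δl * G * Real.sqrt 2) (Δl * K * ηb) := by
    rw [hσdef, returnMap]
    split_ifs
    · module
    · rfl
  have hc : 0 < Δl * G * Real.sqrt 2 := by positivity
  have hp : pvol σ = p := by rw [hσ, pvol_returnMap, hpeq]
  have hϱ : rho σ = ϱ := by rw [hσ, rho_returnMap σtr hc.le, hϱeq]
  obtain ⟨n, hn, hσn⟩ := exists_mem_subgradRho_returnMap hσtr hc (Δl * K * ηb)
  refine ⟨hp, hϱ, ⟨n, hσ ▸ hn, by rw [hσ, hσn]; module⟩, hεeq, ?_⟩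
  rw [hp, hϱ, hfred]

/-- Drucker–Prager plastic correction, converse direction. -/
theorem DP_plastic_corrector_converse
    (G K η ηb ξ c0 : ℝ)
    (hG : 0 < G) (hK : 0 < K) (hη : 0 < η) (hηb : 0 < ηb) (hξ : 0 < ξ) (hc0 : 0 < c0)
    (H : ℝ → ℝ) (Hmono : MonotoneOn H (Set.Ici 0))
    (Hcont : ContinuousOn H (Set.Ici 0)) (H0 : H 0 = 0) (Hnn : ∀ x ≥ (0:ℝ), 0 ≤ H x)
    (σtr : Mat3) (hσtr : σtr.IsSymm) (εtr : ℝ) (hεtr : 0 ≤ εtr)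
    (htrial : 0 < fDP η ξ c0 (pvol σtr) (rho σtr) (H εtr))
    (p ϱ εp Δl : ℝ) (hεp : 0 ≤ εp) (hΔl : 0 < Δl)
    (hpeq : p = pvol σtr - Δl * K * ηb)
    (hϱeq : ϱ = max 0 (rho σtr - Δl * G * Real.sqrt 2))
    (hεeq : εp = εtr + Δl * ξ)
    (hfred : fDP η ξ c0 p ϱ (H εp) = 0)
    (σ : Mat3)
    (hσdef : σ = if Δl * G * Real.sqrt 2 < rho σtr then
        σtr - Δl • ((G * Real.sqrt 2) • ((rho σtr)⁻¹ • devm σtr) + (K * ηb) • (1 : Mat3))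
      else
        (pvol σtr - Δl * K * ηb) • (1 : Mat3)) :
    pvol σ = p ∧ rho σ = ϱ ∧
    (∃ n ∈ subgradRho σ,
      σ = σtr - Δl • ((G * Real.sqrt 2) • n + (K * ηb) • (1 : Mat3))) ∧
    εp = εtr + Δl * ξ ∧
    fDP η ξ c0 (pvol σ) (rho σ) (H εp) = 0 :=
  DP_plastic_corrector_converse_general G K η ηb ξ c0 hG H σtr hσtr εtr p ϱ εp Δl hΔl hpeq hϱeq hεeq
    hfred σ hσdef
end
end

section
/- (Solvability for the Drucker–Prager model.) Suppose q_tr(0) = √(1/2)·ϱ^tr + η·p^tr − ξ·(c₀ + H(ε̄^{p,tr})) > 0. Then the equation q_tr(Δλ) = 0 has exactly one solution Δλ in [0,∞), and this solution satisfies Δλ > 0. Moreover, with γ* = ϱ^tr/(G·√2): if q_tr(γ*) < 0 then Δλ ∈ (0, γ*) and max(0, ϱ^tr − Δλ·G·√2) > 0; conversely, if q_tr(γ*) ≥ 0 then Δλ ≥ γ* and max(0, ϱ^tr − Δλ·G·√2) = 0. -/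
noncomputable section

/-- solvability of q_tr(Δλ) = 0 for the Drucker–Prager model, and the
a-priori decision between return to the smooth portion (ϱ > 0) and to the apex (ϱ = 0). -/
theorem qtr_DP_solvability
    (G K η ηb ξ c0 : ℝ)
    (hG : 0 < G) (hK : 0 < K) (hη : 0 < η) (hηb : 0 < ηb) (hξ : 0 < ξ) (hc0 : 0 < c0)
    (H : ℝ → ℝ) (Hmono : MonotoneOn H (Set.Ici 0))
    (Hcont : ContinuousOn H (Set.Ici 0)) (H0 : H 0 = 0) (Hnn : ∀ x ≥ (0:ℝ), 0 ≤ H x)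
    (ptr ϱtr εtr : ℝ) (hϱtr : 0 ≤ ϱtr) (hεtr : 0 ≤ εtr)
    (q : ℝ → ℝ)
    (hq : ∀ γ, q γ = Real.sqrt (1/2) * max 0 (ϱtr - γ * G * Real.sqrt 2)
      + η * (ptr - γ * K * ηb) - ξ * (c0 + H (εtr + γ * ξ)))
    (htrial : 0 < q 0) :
    (∃! γ : ℝ, 0 ≤ γ ∧ q γ = 0) ∧
    (∀ Δl : ℝ, 0 ≤ Δl → q Δl = 0 →
      0 < Δl ∧
      (q (ϱtr / (G * Real.sqrt 2)) < 0 →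
        Δl < ϱtr / (G * Real.sqrt 2) ∧ 0 < max 0 (ϱtr - Δl * G * Real.sqrt 2)) ∧
      (0 ≤ q (ϱtr / (G * Real.sqrt 2)) →
        ϱtr / (G * Real.sqrt 2) ≤ Δl ∧ max 0 (ϱtr - Δl * G * Real.sqrt 2) = 0)) := by
  have hs2 : (0:ℝ) < Real.sqrt 2 := Real.sqrt_pos.mpr (by norm_num)
  have hsh : (0:ℝ) ≤ Real.sqrt (1/2) := Real.sqrt_nonneg _
  -- strict antitonicity
  have hanti : StrictAntiOn q (Set.Ici 0) := by
    intro a ha b hb hab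
    simp only [Set.mem_Ici] at ha hb
    have hmax : max 0 (ϱtr - b * G * Real.sqrt 2) ≤ max 0 (ϱtr - a * G * Real.sqrt 2) := by
      apply max_le_max le_rfl
      nlinarith [mul_pos hG hs2]
    have hH : H (εtr + a * ξ) ≤ H (εtr + b * ξ) := by
      apply Hmono (by simp; nlinarith) (by simp; nlinarith) (by nlinarith)
    rw [hq a, hq b]
    have h1 : Real.sqrt (1/2) * max 0 (ϱtr - b * G * Real.sqrt 2)
        ≤ Real.sqrt (1/2) * max 0 (ϱtr - a * G * Real.sqrt 2) :=
      mul_le_mul_of_nonneg_left hmax hsh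
    nlinarith [mul_pos (mul_pos hη hK) hηb]
  -- continuity
  have hc : ContinuousOn q (Set.Ici 0) := by
    have h1 : ContinuousOn (fun γ : ℝ => Real.sqrt (1/2) * max 0 (ϱtr - γ * G * Real.sqrt 2)
        + η * (ptr - γ * K * ηb) - ξ * (c0 + H (εtr + γ * ξ))) (Set.Ici 0) := by
      apply ContinuousOn.sub
      · refine ContinuousOn.add ?_ (by fun_prop)
        apply ContinuousOn.mul continuousOn_const
        have : Continuous fun γ : ℝ => ϱtr - γ * G * Real.sqrt 2 := by fun_prop
        exact (continuous_const.max this).continuousOn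
      · apply ContinuousOn.mul continuousOn_const
        apply ContinuousOn.add continuousOn_const
        apply Hcont.comp (by fun_prop)
        intro x hx
        simp only [Set.mem_Ici] at hx ⊢
        nlinarith
    exact h1.congr (fun x _ => hq x)
  -- a point where q is negative
  set b : ℝ := max 0 ((Real.sqrt (1/2) * ϱtr + η * ptr) / (η * K * ηb)) with hbdef
  have hb0 : 0 ≤ b := le_max_left _ _
  have hqb : q b < 0 := by
    have hden : 0 < η * K * ηb := mul_pos (mul_pos hη hK) hηb
    have hb1 : (Real.sqrt (1/2) * ϱtr + η * ptr) / (η * K * ηb) ≤ b := le_max_right _ _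
    have hb2 : Real.sqrt (1/2) * ϱtr + η * ptr ≤ b * (η * K * ηb) :=
      (div_le_iff₀ hden).mp hb1
    have hmax : max 0 (ϱtr - b * G * Real.sqrt 2) ≤ ϱtr := by
      apply max_le hϱtr
      nlinarith [mul_pos hG hs2]
    have hHnn : 0 ≤ H (εtr + b * ξ) := Hnn _ (by nlinarith)
    rw [hq b]
    have h1 : Real.sqrt (1/2) * max 0 (ϱtr - b * G * Real.sqrt 2)
        ≤ Real.sqrt (1/2) * ϱtr := mul_le_mul_of_nonneg_left hmax hsh
    nlinarith
  -- existence of the root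
  obtain ⟨γ, hγmem, hγ⟩ : ∃ γ ∈ Set.Icc (0:ℝ) b, q γ = 0 := by
    have hsub : Set.Icc (q b) (q 0) ⊆ q '' Set.Icc 0 b :=
      intermediate_value_Icc' hb0 (hc.mono (Set.Icc_subset_Ici_self))
    obtain ⟨γ, hγmem, hγeq⟩ := hsub ⟨le_of_lt hqb, le_of_lt htrial⟩
    exact ⟨γ, hγmem, hγeq⟩
  have hγ0 : 0 ≤ γ := hγmem.1
  constructor
  · refine ⟨γ, ⟨hγ0, hγ⟩, ?_⟩
    rintro y ⟨hy0, hyq⟩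
    exact hanti.injOn hy0 hγ0 (by rw [hyq, hγ])
  · intro Δl hΔl hΔq
    have hΔpos : 0 < Δl := by
      rcases lt_or_eq_of_le hΔl with h | h
      · exact h
      · exfalso; rw [← h] at hΔq; linarith
    set γs : ℝ := ϱtr / (G * Real.sqrt 2) with hγsdef
    have hγs0 : 0 ≤ γs := div_nonneg hϱtr (le_of_lt (mul_pos hG hs2))
    refine ⟨hΔpos, ?_, ?_⟩
    · intro hqγs
      have hlt : Δl < γs := by
        by_contra h
        push_neg at h
        rcases lt_or_eq_of_le h with h' | h'
        · have := hanti (Set.mem_Ici.mpr hγs0) (Set.mem_Ici.mpr hΔl) h'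
          linarith
        · rw [← h'] at hΔq; linarith
      have hmul : Δl * (G * Real.sqrt 2) < ϱtr :=
        (lt_div_iff₀ (mul_pos hG hs2)).mp hlt
      refine ⟨hlt, ?_⟩
      have : 0 < ϱtr - Δl * G * Real.sqrt 2 := by nlinarith
      exact lt_max_of_lt_right this
    · intro hqγs
      have hge : γs ≤ Δl := by
        by_contra h
        push_neg at h
        have := hanti (Set.mem_Ici.mpr hΔl) (Set.mem_Ici.mpr hγs0) h
        linarith
      refine ⟨hge, ?_⟩
      have hmul : ϱtr ≤ Δl * (G * Real.sqrt 2) :=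
        (div_le_iff₀ (mul_pos hG hs2)).mp hge
      apply max_eq_left
      nlinarith
end
end

section
/- For every γ ≥ 0, the real number ϱ̂_tr(γ) = (1/(1 + γ·6G/f̄_c²))·max(0, ϱ^tr − γ·2G·m₀/(√6·f̄_c)) is the unique ϱ ∈ ℝ satisfying ϱ = max(0, ϱ^tr − γ·2G·(3ϱ/f̄_c² + m₀/(√6·f̄_c))). Moreover, the function γ ↦ ϱ̂_tr(γ) is strictly decreasing on the interval [0, √6·f̄_c·ϱ^tr/(2G·m₀)) and vanishes for γ ≥ √6·f̄_c·ϱ^tr/(2G·m₀). -/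
noncomputable section

/-- Generic fixed-point lemma for `ϱ = max 0 (b - a ϱ)` with `a ≥ 0`. -/
lemma aux_fixed (a b ϱ : ℝ) (ha : 0 ≤ a) :
    ϱ = max 0 (b - a * ϱ) ↔ ϱ = (1 / (1 + a)) * max 0 b := by
  have hA : (0:ℝ) < 1 + a := by linarith
  rcases le_or_gt b 0 with hb | hb
  · rw [max_eq_left hb, mul_zero]
    constructor
    · intro h
      have h0 : 0 ≤ ϱ := h ▸ le_max_left _ _
      have h1 : b - a * ϱ ≤ 0 := by nlinarith
      rw [max_eq_left h1] at h
      exact h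
    · rintro rfl
      rw [mul_zero, sub_zero, max_eq_left hb]
  · rw [max_eq_right hb.le]
    constructor
    · intro h
      have h0 : 0 ≤ ϱ := h ▸ le_max_left _ _
      rcases eq_or_lt_of_le h0 with h0' | h0'
      · exfalso
        rw [← h0', mul_zero, sub_zero, max_eq_right hb.le] at h
        linarith
      · have hmax : max 0 (b - a * ϱ) = b - a * ϱ := by
          rcases max_cases 0 (b - a * ϱ) with ⟨h1, h2⟩ | ⟨h1, h2⟩
          · exfalso; rw [h1] at h; linarith
          · exact h1
        rw [hmax] at h
        have hA' : (1 + a) ≠ 0 := ne_of_gt hA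
        field_simp
        linear_combination h
    · intro h
      have hv : b - a * ((1 / (1 + a)) * b) = (1 / (1 + a)) * b := by
        field_simp
        ring
      rw [h, hv]
      exact (max_eq_right (by positivity)).symm

/-- closed form of ϱ̂_tr(γ), its uniqueness as the fixed point of the
deviatoric return equation, strict decrease on [0, √6 f̄_c ϱ^tr/(2Gm₀)), and vanishing
beyond that point. -/
theorem rho_hat_JG
    (G m0 fc ϱtr : ℝ) (hG : 0 < G) (hm0 : 0 < m0) (hfc : 0 < fc) (hϱtr : 0 < ϱtr)
    (ϱh : ℝ → ℝ)
    (hϱh : ∀ γ, ϱh γ = (1 / (1 + γ * 6 * G / fc^2)) *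
      max 0 (ϱtr - γ * 2 * G * m0 / (Real.sqrt 6 * fc))) :
    (∀ γ ≥ (0:ℝ),
      ϱh γ = max 0 (ϱtr - γ * 2 * G * (3 * ϱh γ / fc^2 + m0 / (Real.sqrt 6 * fc))) ∧
      ∀ ϱ : ℝ, ϱ = max 0 (ϱtr - γ * 2 * G * (3 * ϱ / fc^2 + m0 / (Real.sqrt 6 * fc))) →
        ϱ = ϱh γ) ∧
    StrictAntiOn ϱh (Set.Ico 0 (Real.sqrt 6 * fc * ϱtr / (2 * G * m0))) ∧
    (∀ γ ≥ Real.sqrt 6 * fc * ϱtr / (2 * G * m0), ϱh γ = 0) := by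
  have h6 : (0:ℝ) < Real.sqrt 6 := Real.sqrt_pos.mpr (by norm_num)
  have hfc2 : (0:ℝ) < fc ^ 2 := by positivity
  have key : ∀ γ : ℝ, 0 ≤ γ → ∀ ϱ : ℝ,
      ϱ = max 0 (ϱtr - γ * 2 * G * (3 * ϱ / fc^2 + m0 / (Real.sqrt 6 * fc))) ↔ ϱ = ϱh γ := by
    intro γ hγ ϱ
    have ha : 0 ≤ γ * 6 * G / fc ^ 2 := by positivity
    have hrw : ϱtr - γ * 2 * G * (3 * ϱ / fc ^ 2 + m0 / (Real.sqrt 6 * fc))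
        = (ϱtr - γ * 2 * G * m0 / (Real.sqrt 6 * fc)) - (γ * 6 * G / fc ^ 2) * ϱ := by
      field_simp
      ring
    rw [hrw, hϱh γ]
    exact aux_fixed _ _ _ ha
  refine ⟨fun γ hγ => ⟨((key γ hγ (ϱh γ)).mpr rfl).symm ▸ ((key γ hγ (ϱh γ)).mpr rfl),
      fun ϱ h => (key γ hγ ϱ).mp h⟩, ?_, ?_⟩
  · intro γ1 h1 γ2 h2 h12
    obtain ⟨h10, h1T⟩ := h1
    obtain ⟨h20, h2T⟩ := h2
    have hb1 : 0 < ϱtr - γ1 * 2 * G * m0 / (Real.sqrt 6 * fc) := by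
      rw [sub_pos, div_lt_iff₀ (by positivity)]
      have := (lt_div_iff₀ (by positivity : (0:ℝ) < 2 * G * m0)).mp h1T
      nlinarith
    have hb2 : 0 < ϱtr - γ2 * 2 * G * m0 / (Real.sqrt 6 * fc) := by
      rw [sub_pos, div_lt_iff₀ (by positivity)]
      have := (lt_div_iff₀ (by positivity : (0:ℝ) < 2 * G * m0)).mp h2T
      nlinarith
    have hA1 : (0:ℝ) < 1 + γ1 * 6 * G / fc ^ 2 := by positivity
    have hA2 : (0:ℝ) < 1 + γ2 * 6 * G / fc ^ 2 := by positivity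
    have hb12 : ϱtr - γ2 * 2 * G * m0 / (Real.sqrt 6 * fc)
        < ϱtr - γ1 * 2 * G * m0 / (Real.sqrt 6 * fc) := by
      have : γ1 * 2 * G * m0 / (Real.sqrt 6 * fc) < γ2 * 2 * G * m0 / (Real.sqrt 6 * fc) := by
        gcongr
      linarith
    have hA12 : 1 + γ1 * 6 * G / fc ^ 2 < 1 + γ2 * 6 * G / fc ^ 2 := by
      have : γ1 * 6 * G / fc ^ 2 < γ2 * 6 * G / fc ^ 2 := by
        gcongr
      linarith
    rw [hϱh γ1, hϱh γ2, max_eq_right hb1.le, max_eq_right hb2.le,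
      one_div_mul_eq_div, one_div_mul_eq_div, div_lt_div_iff₀ hA2 hA1]
    nlinarith [mul_pos (sub_pos.mpr hb12) hA2, mul_pos hb2 (sub_pos.mpr hA12)]
  · intro γ hγ
    have hb : ϱtr - γ * 2 * G * m0 / (Real.sqrt 6 * fc) ≤ 0 := by
      rw [sub_nonpos, le_div_iff₀ (by positivity)]
      have := (div_le_iff₀ (by positivity : (0:ℝ) < 2 * G * m0)).mp hγ
      nlinarith
    rw [hϱh γ, max_eq_left hb, mul_zero]
end
end
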